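/- Let G be a finite group acting on a measure space (α, μ) by measure-preserving measurable bijections, and let s ⊆ α be a measurable fundamental domain for this action. Let H : α → ℝ be measurable with H(y) > 0 for all y ∈ α, such that H·log H is integrable on α and y ↦ (∑_{g ∈ G} H(g•y))·log(∑_{g ∈ G} H(g•y)) is integrable on s. Then ∫_α H(y) log H(y) dμ(y) ≤ ∫_s (∑_{g ∈ G} H(g•y))·log(∑_{g ∈ G} H(g•y)) dμ(y). -/
import Mathlib

open MeasureTheory

/-- For a finite group `G` acting on a measure space by measure-preserving
measurable bijections with measurable fundamental domain `s`, and `H > 0` with the stated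
integrability, `∫_α H log H ≤ ∫_s (∑_g H(g•y)) log (∑_g H(g•y))`. -/
theorem entropy_le_entropy_of_quotient_sum
    {G α : Type*} [Group G] [Fintype G] [MulAction G α]
    [MeasurableSpace G] [MeasurableSpace α] [MeasurableSMul G α]
    (μ : Measure α) [SMulInvariantMeasure G α μ]
    (s : Set α) (hsm : MeasurableSet s) (hs : IsFundamentalDomain G s μ)
    (H : α → ℝ) (hmeas : Measurable H) (hpos : ∀ y, 0 < H y)
    (hint : Integrable (fun y => H y * Real.log (H y)) μ)
    (hint' : IntegrableOn
      (fun y => (∑ g : G, H (g • y)) * Real.log (∑ g : G, H (g • y))) s μ) :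
    ∫ y, H y * Real.log (H y) ∂μ ≤
      ∫ y in s, (∑ g : G, H (g • y)) * Real.log (∑ g : G, H (g • y)) ∂μ := by
  have hig : ∀ g : G, IntegrableOn (fun x => H (g • x) * Real.log (H (g • x))) s μ := by
    intro g
    have : Integrable (fun x => H (g • x) * Real.log (H (g • x))) μ :=
      (measurePreserving_smul g μ).integrable_comp_emb
        (measurableEmbedding_const_smul g) |>.mpr hint
    exact this.integrableOn
  have h1 : ∫ y, H y * Real.log (H y) ∂μ
      = ∑ g : G, ∫ x in s, H (g • x) * Real.log (H (g • x)) ∂μ := by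
    rw [hs.integral_eq_tsum'' _ hint, tsum_fintype]
  rw [h1, ← integral_finset_sum _ (fun g _ => hig g)]
  refine setIntegral_mono_on (integrable_finset_sum _ (fun g _ => hig g)) hint' hsm ?_
  intro x _
  calc ∑ g : G, H (g • x) * Real.log (H (g • x))
      ≤ ∑ g : G, H (g • x) * Real.log (∑ g' : G, H (g' • x)) := by
        refine Finset.sum_le_sum fun g _ => ?_
        exact mul_le_mul_of_nonneg_left
          (Real.log_le_log (hpos _)
            (Finset.single_le_sum (fun g' _ => (hpos (g' • x)).le) (Finset.mem_univ g)))
          (hpos _).le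
    _ = (∑ g : G, H (g • x)) * Real.log (∑ g' : G, H (g' • x)) := by
        rw [Finset.sum_mul]
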